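/- arXiv:2312.09885 — 5 statements merged into one kernel-verified Lean document; each statement's English description precedes it below -/
import Mathlib

section
/- Let d be a positive even integer, B_p, B_q ⊆ {1,…,d} subsets of size d/2, and y_p, y_q ∈ {−1, +1}. Define the point p ∈ ℝ^{d+1} by p_i = −y_p for i ∈ B_p, p_i = 0 for i ∈ {1,…,d} \ B_p, and p_{d+1} = y_p/2; define q analogously from B_q, y_q. Define the classifier w_p ∈ ℝ^{d+1} by (w_p)_i = 0 for i ∈ B_p, (w_p)_i = 1 for i ∈ {1,…,d} \ B_p, and (w_p)_{d+1} = 1. Then ⟨p, w_p⟩ = y_p/2, and if B_q ≠ B_p then ⟨q, w_p⟩ = −y_q·|B_q \ B_p| + y_q/2, which has sign −y_q. -/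
theorem f1_lower_bound_geometry (d : ℕ) (hd : 0 < d) (hde : Even d)
    (Bp Bq : Finset (Fin d)) (hBp : Bp.card = d / 2) (hBq : Bq.card = d / 2)
    (yp yq : ℝ) (hyp : yp = -1 ∨ yp = 1) (hyq : yq = -1 ∨ yq = 1) :
    ((∑ i : Fin d, (if i ∈ Bp then -yp else 0) * (if i ∈ Bp then 0 else 1)) + (yp / 2) * 1
      = yp / 2)
    ∧ (Bq ≠ Bp →
        ((∑ i : Fin d, (if i ∈ Bq then -yq else 0) * (if i ∈ Bp then 0 else 1)) + (yq / 2) * 1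
           = -yq * ((Bq \ Bp).card : ℝ) + yq / 2)
        ∧ Real.sign ((∑ i : Fin d, (if i ∈ Bq then -yq else 0) * (if i ∈ Bp then 0 else 1))
            + (yq / 2) * 1) = -yq) := by
  have h1 : (∑ i : Fin d, (if i ∈ Bp then -yp else 0) * (if i ∈ Bp then 0 else 1)) = 0 := by
    apply Finset.sum_eq_zero; intro i _; by_cases h : i ∈ Bp <;> simp [h]
  have h2 : (∑ i : Fin d, (if i ∈ Bq then -yq else 0) * (if i ∈ Bp then 0 else 1))
      = -yq * ((Bq \ Bp).card : ℝ) := by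
    have : ∀ i : Fin d, (if i ∈ Bq then -yq else 0) * (if i ∈ Bp then 0 else 1)
        = if i ∈ Bq \ Bp then -yq else 0 := by
      intro i; by_cases h : i ∈ Bq <;> by_cases h' : i ∈ Bp <;> simp [h, h', Finset.mem_sdiff]
    simp_rw [this, Finset.sum_ite_mem, Finset.univ_inter, Finset.sum_const, nsmul_eq_mul]
    ring
  refine ⟨by rw [h1]; ring, fun hne => ⟨by rw [h2]; ring, ?_⟩⟩
  rw [h2, mul_one]
  have hcard : 1 ≤ (Bq \ Bp).card := by
    rcases Finset.eq_empty_or_nonempty (Bq \ Bp) with he | hne'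
    · exfalso
      have hsub : Bq ⊆ Bp := by
        intro x hx; by_contra hxp
        exact Finset.notMem_empty x (he ▸ Finset.mem_sdiff.mpr ⟨hx, hxp⟩)
      exact hne (Finset.eq_of_subset_of_card_le hsub (hBp ▸ hBq ▸ le_refl _))
    · exact Finset.card_pos.mpr hne'
  have hc : (1 : ℝ) ≤ ((Bq \ Bp).card : ℝ) := by exact_mod_cast hcard
  rcases hyq with h | h <;> subst h
  · have : (0:ℝ) < -(-1) * ((Bq \ Bp).card : ℝ) + -1 / 2 := by nlinarith
    rw [Real.sign_of_pos this]; norm_num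
  · have : -(1:ℝ) * ((Bq \ Bp).card : ℝ) + 1 / 2 < 0 := by nlinarith
    rw [Real.sign_of_neg this]
end

section
/- Let ε ∈ (0,1), c > 1, and let tp > 0, fp, fn ≥ 0 and n > 0 be reals with tp ≥ n(1 − cε)/(2c(1 − ε)). Then (1−ε)·tp / (tp + (1/2)(fn+fp) − (ε·tp − ε·n/2)) ≥ (1 − cε)·tp / (tp + (1/2)(fn+fp)), provided the left-hand denominator is positive. -/
theorem f1_coreset_lower_guarantee (ε c tp fp fn n : ℝ)
    (hε0 : 0 < ε) (hε1 : ε < 1) (hc : 1 < c)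
    (htp : 0 < tp) (hfp : 0 ≤ fp) (hfn : 0 ≤ fn) (hn : 0 < n)
    (htpbound : n * (1 - c * ε) / (2 * c * (1 - ε)) ≤ tp)
    (hden : 0 < tp + (1/2) * (fn + fp) - (ε * tp - ε * n / 2)) :
    (1 - c * ε) * tp / (tp + (1/2) * (fn + fp))
      ≤ (1 - ε) * tp / (tp + (1/2) * (fn + fp) - (ε * tp - ε * n / 2)) := by
  have hD : 0 < tp + (1/2) * (fn + fp) := by positivity
  have hpos : 0 < 2 * c * (1 - ε) := by nlinarith
  have hb : n * (1 - c * ε) ≤ tp * (2 * c * (1 - ε)) := by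
    rwa [div_le_iff₀ hpos] at htpbound
  rw [div_le_div_iff₀ hD hden]
  nlinarith [mul_nonneg hfn hε0.le, mul_nonneg (mul_nonneg hε0.le (sub_pos.mpr hc).le) (add_nonneg hfn hfp), mul_pos hε0 htp]
end

section
/- Let ε ∈ (0,1), c > 1, and let tp > 0, fp, fn ≥ 0 and n > 0 be reals with tp ≥ n(1 + cε)/(2c(1 + ε)). Then (1+ε)·tp / (tp + (1/2)(fn+fp) + (ε·tp − ε·n/2)) ≤ (1 + cε)·tp / (tp + (1/2)(fn+fp)), provided the left-hand denominator is positive. -/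
theorem f1_coreset_upper_guarantee (ε c tp fp fn n : ℝ)
    (hε0 : 0 < ε) (hε1 : ε < 1) (hc : 1 < c)
    (htp : 0 < tp) (hfp : 0 ≤ fp) (hfn : 0 ≤ fn) (hn : 0 < n)
    (htpbound : n * (1 + c * ε) / (2 * c * (1 + ε)) ≤ tp)
    (hden : 0 < tp + (1/2) * (fn + fp) + (ε * tp - ε * n / 2)) :
    (1 + ε) * tp / (tp + (1/2) * (fn + fp) + (ε * tp - ε * n / 2))
      ≤ (1 + c * ε) * tp / (tp + (1/2) * (fn + fp)) := by
  have hden2 : 0 < tp + (1/2) * (fn + fp) := by linarith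
  rw [div_le_div_iff₀ hden hden2]
  have hb : n * (1 + c * ε) ≤ tp * (2 * c * (1 + ε)) := by
    rw [div_le_iff₀ (by positivity)] at htpbound
    linarith
  nlinarith [mul_pos hε0 htp, mul_nonneg hε0.le (mul_nonneg hfn hfp),
    mul_nonneg (sub_nonneg.2 hc.le) (mul_nonneg hε0.le (by linarith : (0:ℝ) ≤ (1/2)*(fn+fp)))]
end

section
/- Let γ ∈ (0,1), ε ∈ (0, γ), and let tp, tn, fp, fn ≥ 0 with n = tp+tn+fp+fn > 0, tp ≥ γn, tn ≥ γn, and T' = (tp+fn)/n ∈ (0,1). Then (tp − T'(tp+fp) + 2εn)/√(T'(1−T')·(1−ε/γ)²·(tp+fp)(tn+fn)) ≤ MCC/(1−ε/γ) + 2ε·C', where MCC = (tp − T'(tp+fp))/√(T'(1−T')(tp+fp)(tn+fn)) and C' = (tp/γ)/((1−ε/γ)·√(T'(1−T')(tp+fp)(tn+fn))). -/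
theorem mcc_coreset_upper_guarantee (γ ε tp tn fp fn n T' : ℝ)
    (hγ0 : 0 < γ) (hγ1 : γ < 1) (hε0 : 0 < ε) (hεγ : ε < γ)
    (htp : 0 ≤ tp) (htn : 0 ≤ tn) (hfp : 0 ≤ fp) (hfn : 0 ≤ fn)
    (hn : n = tp + tn + fp + fn) (hnpos : 0 < n)
    (htpγ : γ * n ≤ tp) (htnγ : γ * n ≤ tn)
    (hT : T' = (tp + fn) / n) (hT0 : 0 < T') (hT1 : T' < 1) :
    (tp - T' * (tp + fp) + 2 * ε * n) /
        Real.sqrt (T' * (1 - T') * ((1 - ε / γ)^2 * ((tp + fp) * (tn + fn))))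
    ≤ (tp - T' * (tp + fp)) / Real.sqrt (T' * (1 - T') * ((tp + fp) * (tn + fn)))
        / (1 - ε / γ)
      + 2 * ε * ((tp / γ) /
          ((1 - ε / γ) * Real.sqrt (T' * (1 - T') * ((tp + fp) * (tn + fn))))) := by
  set k := 1 - ε / γ with hkdef
  have hk : 0 < k := by
    have : ε / γ < 1 := (div_lt_one hγ0).mpr hεγ
    simp [hkdef]; linarith
  have htppos : 0 < tp + fp := by nlinarith
  have htnpos : 0 < tn + fn := by nlinarith
  set X := (tp + fp) * (tn + fn) with hXdef
  have hXpos : 0 < X := mul_pos htppos htnpos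
  have hSpos : 0 < Real.sqrt (T' * (1 - T') * X) :=
    Real.sqrt_pos.mpr (mul_pos (mul_pos hT0 (by linarith)) hXpos)
  set S := Real.sqrt (T' * (1 - T') * X) with hSdef
  have hsq : Real.sqrt (T' * (1 - T') * (k ^ 2 * X)) = k * S := by
    have h1 : T' * (1 - T') * (k ^ 2 * X) = k ^ 2 * (T' * (1 - T') * X) := by ring
    rw [h1, Real.sqrt_mul (sq_nonneg k), Real.sqrt_sq hk.le]
  rw [hsq]
  have hkS : 0 < k * S := mul_pos hk hSpos
  have hle : n ≤ tp / γ := (le_div_iff₀' hγ0).mpr htpγ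
  have key : 2 * ε * n / (k * S) ≤ 2 * ε * (tp / γ) / (k * S) := by
    gcongr
  calc (tp - T' * (tp + fp) + 2 * ε * n) / (k * S)
      = (tp - T' * (tp + fp)) / (k * S) + 2 * ε * n / (k * S) := by ring
    _ ≤ (tp - T' * (tp + fp)) / (k * S) + 2 * ε * (tp / γ) / (k * S) := by linarith
    _ = (tp - T' * (tp + fp)) / S / k + 2 * ε * ((tp / γ) / (k * S)) := by
        rw [div_div]; ring
end

section
/- Let d ≥ 4 be an even integer, B_p, B_q ⊆ {1,…,d} distinct subsets of size d/2, y_q ∈ {−1,+1}, and X_q ∈ {−1,+1}. Define q ∈ ℝ^{d+1} by q_i = X_q for i ∈ B_q, q_i = 0 for i ∈ {1,…,d}\B_q, q_{d+1} = y_q/2, and define w_p ∈ ℝ^{d+1} by (w_p)_i = 0 for i ∈ B_p, (w_p)_i = 1 otherwise on {1,…,d}, and (w_p)_{d+1} = 1. Then ⟨q, w_p⟩ = X_q·|B_q \ B_p| + y_q/2 and its sign equals X_q. -/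
theorem mcc_lower_bound_geometry (d : ℕ) (hd : 4 ≤ d) (hde : Even d)
    (Bp Bq : Finset (Fin d)) (hBp : Bp.card = d / 2) (hBq : Bq.card = d / 2)
    (hne : Bq ≠ Bp)
    (yq Xq : ℝ) (hyq : yq = -1 ∨ yq = 1) (hXq : Xq = -1 ∨ Xq = 1) :
    ((∑ i : Fin d, (if i ∈ Bq then Xq else 0) * (if i ∈ Bp then 0 else 1)) + (yq / 2) * 1
       = Xq * ((Bq \ Bp).card : ℝ) + yq / 2)
    ∧ Real.sign ((∑ i : Fin d, (if i ∈ Bq then Xq else 0) * (if i ∈ Bp then 0 else 1))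
        + (yq / 2) * 1) = Xq := by
  have hsum : (∑ i : Fin d, (if i ∈ Bq then Xq else 0) * (if i ∈ Bp then 0 else 1))
      = Xq * ((Bq \ Bp).card : ℝ) := by
    have : ∀ i : Fin d, (if i ∈ Bq then Xq else 0) * (if i ∈ Bp then 0 else 1)
        = if i ∈ Bq \ Bp then Xq else 0 := by
      intro i
      by_cases h1 : i ∈ Bq <;> by_cases h2 : i ∈ Bp <;>
        simp [h1, h2, Finset.mem_sdiff]
    rw [Finset.sum_congr rfl (fun i _ => this i)]
    rw [Finset.sum_ite_mem, Finset.univ_inter, Finset.sum_const, nsmul_eq_mul, mul_comm]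
  have hcard : 1 ≤ (Bq \ Bp).card := by
    rcases Finset.eq_empty_or_nonempty (Bq \ Bp) with h | h
    · exfalso
      have hsub : Bq ⊆ Bp := by
        rw [← Finset.sdiff_eq_empty_iff_subset]; exact h
      exact hne (Finset.eq_of_subset_of_card_le hsub (hBp ▸ hBq ▸ le_refl _))
    · exact Finset.card_pos.mpr h
  have hcard' : (1 : ℝ) ≤ ((Bq \ Bp).card : ℝ) := by exact_mod_cast hcard
  have heq : (∑ i : Fin d, (if i ∈ Bq then Xq else 0) * (if i ∈ Bp then 0 else 1)) + (yq / 2) * 1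
      = Xq * ((Bq \ Bp).card : ℝ) + yq / 2 := by rw [hsum]; ring
  refine ⟨heq, ?_⟩
  rw [heq]
  have hy : -(1/2 : ℝ) ≤ yq / 2 ∧ yq / 2 ≤ 1/2 := by
    rcases hyq with h | h <;> simp [h] <;> norm_num
  rcases hXq with h | h
  · rw [h]
    have : (-1 : ℝ) * ((Bq \ Bp).card : ℝ) + yq / 2 < 0 := by nlinarith [hy.1, hy.2]
    rw [Real.sign_of_neg this]
  · rw [h]
    have : (0:ℝ) < (1 : ℝ) * ((Bq \ Bp).card : ℝ) + yq / 2 := by nlinarith [hy.1, hy.2]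
    rw [Real.sign_of_pos this]
end
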